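/- Let (g, [·,·]_g, φ_g) and (h, [·,·]_h, φ_h) be regular Hom-Lie algebras over a field K, and let ρ : g → gl(h) and skew-symmetric bilinear ω : g × g → h satisfy conditions (p1)–(p5). Then the Hom-Lie algebra (g ⊕ h, [·,·]_{(ρ,ω)}, φ), with φ(x+u) = φ_g(x) + φ_h(u), is a diagonal non-abelian extension of g by h: the inclusion ι : h → g ⊕ h, ι(u) = 0 + u, and the projection p : g ⊕ h → g, p(x+u) = x, are Hom-Lie algebra morphisms forming a short exact sequence 0 → h → g ⊕ h → g → 0, and the subspace g ⊕ {0} is φ-invariant with ι(h) ⊕ (g ⊕ {0}) = g ⊕ h. -/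
import Mathlib


/-- The bracket `[A,B]_φ = φ∘A∘φ⁻¹∘B∘φ⁻¹ − φ∘B∘φ⁻¹∘A∘φ⁻¹` on `gl(h)`. -/
def glBr {K : Type*} [Field K] {h : Type*} [AddCommGroup h] [Module K h]
    (φ : h ≃ₗ[K] h) (A B : h →ₗ[K] h) : h →ₗ[K] h :=
  φ.toLinearMap ∘ₗ A ∘ₗ φ.symm.toLinearMap ∘ₗ B ∘ₗ φ.symm.toLinearMap
  - φ.toLinearMap ∘ₗ B ∘ₗ φ.symm.toLinearMap ∘ₗ A ∘ₗ φ.symm.toLinearMap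

/-- The bracket `[x+u, y+v]_{(ρ,ω)} = [x,y]_g + ω(x,y) + ρ_x(v) − ρ_y(u) + [u,v]_h`
on `g ⊕ h`. -/
def extBr {K : Type*} [Field K] {g h : Type*}
    [AddCommGroup g] [Module K g] [AddCommGroup h] [Module K h]
    (brg : g →ₗ[K] g →ₗ[K] g) (brh : h →ₗ[K] h →ₗ[K] h)
    (ρ : g →ₗ[K] Module.End K h) (ω : g →ₗ[K] g →ₗ[K] h)
    (X Y : g × h) : g × h :=
  (brg X.1 Y.1, ω X.1 Y.1 + ρ X.1 Y.2 - ρ Y.1 X.2 + brh X.2 Y.2)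

/-- The map `φ(x+u) = φ_g(x) + φ_h(u)` on `g ⊕ h`. -/
def extPhi {K : Type*} [Field K] {g h : Type*}
    [AddCommGroup g] [Module K g] [AddCommGroup h] [Module K h]
    (φg : g ≃ₗ[K] g) (φh : h ≃ₗ[K] h) (X : g × h) : g × h :=
  (φg X.1, φh X.2)

/-- If `(ρ, ω)` satisfy (p1)–(p5), the Hom-Lie algebra
`(g ⊕ h, [·,·]_{(ρ,ω)}, φ)` is a diagonal non-abelian extension of `g` by `h`. -/
theorem stmt14 {K : Type*} [Field K] {g h : Type*}
    [AddCommGroup g] [Module K g] [AddCommGroup h] [Module K h]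
    -- the regular Hom-Lie algebra g
    (brg : g →ₗ[K] g →ₗ[K] g) (φg : g ≃ₗ[K] g)
    (hskewg : ∀ x y, brg x y = - brg y x)
    (hmulg : ∀ x y, φg (brg x y) = brg (φg x) (φg y))
    (hjacg : ∀ x y z,
      brg (φg x) (brg y z) + brg (φg y) (brg z x) + brg (φg z) (brg x y) = 0)
    -- the regular Hom-Lie algebra h
    (brh : h →ₗ[K] h →ₗ[K] h) (φh : h ≃ₗ[K] h)
    (hskewh : ∀ u v, brh u v = - brh v u)
    (hmulh : ∀ u v, φh (brh u v) = brh (φh u) (φh v))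
    (hjach : ∀ u v w,
      brh (φh u) (brh v w) + brh (φh v) (brh w u) + brh (φh w) (brh u v) = 0)
    -- ρ linear, ω bilinear skew-symmetric
    (ρ : g →ₗ[K] Module.End K h) (ω : g →ₗ[K] g →ₗ[K] h)
    (hωskew : ∀ x y, ω x y = - ω y x)
    -- conditions (p1)-(p5)
    (hp1 : ∀ x y, φh (ω x y) = ω (φg x) (φg y))
    (hp2 : ∀ x u, φh (ρ x u) = ρ (φg x) (φh u))
    (hp3 : ∀ x u v, ρ x (brh u v)
      = brh (φh u) (φh.symm (ρ x (φh v))) + brh (φh.symm (ρ x (φh u))) (φh v))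
    (hp4 : ∀ x y, glBr φh (ρ x) (ρ y) - ρ (brg x y) = brh (ω x y))
    (hp5 : ∀ x y z,
      ρ (φg x) (ω y z) + ρ (φg y) (ω z x) + ρ (φg z) (ω x y)
        = ω (brg x y) (φg z) + ω (brg y z) (φg x) + ω (brg z x) (φg y)) :
    -- (g ⊕ h, [·,·]_{(ρ,ω)}, φ) is a Hom-Lie algebra
    ((∀ X Y : g × h, extBr brg brh ρ ω X Y = - extBr brg brh ρ ω Y X) ∧
     (∀ X Y : g × h,
        extPhi φg φh (extBr brg brh ρ ω X Y)
          = extBr brg brh ρ ω (extPhi φg φh X) (extPhi φg φh Y)) ∧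
     (∀ X Y Z : g × h,
        extBr brg brh ρ ω (extPhi φg φh X) (extBr brg brh ρ ω Y Z)
          + extBr brg brh ρ ω (extPhi φg φh Y) (extBr brg brh ρ ω Z X)
          + extBr brg brh ρ ω (extPhi φg φh Z) (extBr brg brh ρ ω X Y) = 0)) ∧
    -- ι : h → g ⊕ h is an injective Hom-Lie algebra morphism
    (∀ u v : h, extBr brg brh ρ ω (LinearMap.inr K g h u) (LinearMap.inr K g h v)
        = LinearMap.inr K g h (brh u v)) ∧
    (∀ u : h, extPhi φg φh (LinearMap.inr K g h u) = LinearMap.inr K g h (φh u)) ∧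
    Function.Injective (LinearMap.inr K g h) ∧
    -- p : g ⊕ h → g is a surjective Hom-Lie algebra morphism
    (∀ X Y : g × h, LinearMap.fst K g h (extBr brg brh ρ ω X Y)
        = brg (LinearMap.fst K g h X) (LinearMap.fst K g h Y)) ∧
    (∀ X : g × h, LinearMap.fst K g h (extPhi φg φh X)
        = φg (LinearMap.fst K g h X)) ∧
    Function.Surjective (LinearMap.fst K g h) ∧
    -- exactness: ker p = range ι
    (LinearMap.ker (LinearMap.fst K g h) = LinearMap.range (LinearMap.inr K g h)) ∧
    -- the extension is diagonal via the φ-invariant complement g ⊕ {0}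
    (∀ X ∈ LinearMap.range (LinearMap.inl K g h),
        extPhi φg φh X ∈ LinearMap.range (LinearMap.inl K g h)) ∧
    IsCompl (LinearMap.range (LinearMap.inr K g h))
      (LinearMap.range (LinearMap.inl K g h)) := by
  have hglBr : ∀ x y w, glBr φh (ρ x) (ρ y) (φh w)
      = ρ (φg x) (ρ y w) - ρ (φg y) (ρ x w) := by
    intro x y w
    simp only [glBr, LinearMap.sub_apply, LinearMap.coe_comp, Function.comp_apply,
      LinearEquiv.coe_coe, LinearEquiv.symm_apply_apply]
    rw [hp2, hp2, LinearEquiv.apply_symm_apply, LinearEquiv.apply_symm_apply]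
  -- pointwise form of (p4)
  have h4 : ∀ x y w, ρ (φg x) (ρ y w) - ρ (φg y) (ρ x w) - ρ (brg x y) (φh w)
      = brh (ω x y) (φh w) := by
    intro x y w
    have := congrArg (fun f : Module.End K h => f (φh w)) (hp4 x y)
    simpa [LinearMap.sub_apply, hglBr x y w] using this
  -- instantiated form of (p3)
  have hsymm : ∀ x w, φh.symm (ρ (φg x) (φh w)) = ρ x w := by
    intro x w; rw [← hp2, LinearEquiv.symm_apply_apply]
  have h3 : ∀ x v w, ρ (φg x) (brh v w)
      = brh (φh v) (ρ x w) + brh (ρ x v) (φh w) := by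
    intro x v w
    have := hp3 (φg x) v w
    rwa [hsymm, hsymm] at this
  refine ⟨⟨?_, ?_, ?_⟩, ?_, ?_, ?_, ?_, ?_, ?_, ?_, ?_, ?_⟩
  · intro X Y
    refine Prod.ext ?_ ?_
    · simpa [extBr] using hskewg X.1 Y.1
    · simp only [extBr, Prod.snd_neg]
      linear_combination (norm := abel) hωskew X.1 Y.1 + hskewh X.2 Y.2
  · intro X Y
    refine Prod.ext ?_ ?_
    · simpa [extBr, extPhi] using hmulg X.1 Y.1
    · simp only [extBr, extPhi, map_add, map_sub]
      linear_combination (norm := abel) hp1 X.1 Y.1 + hp2 X.1 Y.2 - hp2 Y.1 X.2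
        + hmulh X.2 Y.2
  · rintro ⟨x, u⟩ ⟨y, v⟩ ⟨z, w⟩
    refine Prod.ext ?_ ?_
    · simpa [extBr, extPhi] using hjacg x y z
    · simp only [extBr, extPhi, map_add, map_sub, Prod.snd_add, Prod.snd_zero]
      linear_combination (norm := abel)
        hp5 x y z
        + hωskew (brg x y) (φg z) + hωskew (brg y z) (φg x) + hωskew (brg z x) (φg y)
        + h4 x y w + h4 y z u + h4 z x v
        + hskewh (ω x y) (φh w) + hskewh (ω y z) (φh u) + hskewh (ω z x) (φh v)
        + h3 x v w + h3 y w u + h3 z u v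
        + hskewh (ρ x v) (φh w) + hskewh (ρ y w) (φh u) + hskewh (ρ z u) (φh v)
        + hjach u v w
  · intro u v; simp [extBr]
  · intro u; simp [extPhi]
  · exact LinearMap.inr_injective
  · intro X Y; simp [extBr]
  · intro X; simp [extPhi]
  · exact Prod.fst_surjective
  · ext ⟨a, b⟩
    simp [LinearMap.mem_ker, LinearMap.mem_range, Prod.ext_iff, eq_comm]
  · rintro X ⟨a, rfl⟩
    exact ⟨φg a, by simp [extPhi]⟩
  · exact (LinearMap.isCompl_range_inl_inr).symm
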